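/- Let k be a field of characteristic different from 2, and let R = k[X]/(X² − 1) ≅ k[ℤ/2]. Let k₊ := R/(X − 1) and k₋ := R/(X + 1) be the two one-dimensional simple R-modules. If ∧ is a k-linear additive closed symmetric monoidal structure on the category of left R-modules with unit object K, then K is isomorphic as an R-module to R, to k₊, or to k₋. -/

import Mathlib

open CategoryTheory MonoidalCategory

universe u

/-- An additive closed symmetric monoidal structure on the category of left `R`-modules:
a monoidal structure which is symmetric, closed, and additive (preadditive) in each variable. -/
structure AddClosedSymmMonStruct (R : Type u) [Ring R] : Type (u + 1) where
  mon : MonoidalCategory (ModuleCat.{u} R)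
  symm : @SymmetricCategory (ModuleCat.{u} R) _ mon
  closed : @MonoidalClosed (ModuleCat.{u} R) _ mon
  preadd : @MonoidalPreadditive (ModuleCat.{u} R) _ _ mon

/-- The unit object of the structure. -/
def AddClosedSymmMonStruct.unit {R : Type u} [Ring R] (s : AddClosedSymmMonStruct R) :
    ModuleCat.{u} R :=
  letI := s.mon; 𝟙_ (ModuleCat.{u} R)

/-- The monoidal product (the "wedge") of the structure. -/
def AddClosedSymmMonStruct.wedge {R : Type u} [Ring R] (s : AddClosedSymmMonStruct R)
    (A B : ModuleCat.{u} R) : ModuleCat.{u} R :=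
  letI := s.mon; A ⊗ B

/-- Two additive closed symmetric monoidal structures on `ModuleCat R` are symmetric monoidally
equivalent if there is an equivalence of categories whose underlying functor is monoidal and
braided from the first structure to the second. -/
def AddClosedSymmMonStruct.SymmMonEquivTo {R : Type u} [Ring R]
    (s t : AddClosedSymmMonStruct R) : Prop :=
  ∃ (F : ModuleCat.{u} R ⥤ ModuleCat.{u} R)
    (_ : @Functor.Braided (ModuleCat.{u} R) _ s.mon s.symm.toBraidedCategory
      (ModuleCat.{u} R) _ t.mon t.symm.toBraidedCategory F),
    F.IsEquivalence

/-- The standard additive closed symmetric monoidal structure on modules over a commutative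
ring, given by the tensor product `⊗[R]` with unit `R`. -/
noncomputable def standardAddClosedSymmMonStruct (R : Type u) [CommRing R] :
    AddClosedSymmMonStruct R where
  mon := inferInstance
  symm := inferInstance
  closed := inferInstance
  preadd := inferInstance

/-- A `k`-linear additive closed symmetric monoidal structure on the category of left
`R`-modules, for a `k`-algebra `R`. -/
structure KLinAddClosedSymmMonStruct (k : Type u) [Field k] (R : Type u) [Ring R] [Algebra k R]
    extends AddClosedSymmMonStruct R where
  lin : @MonoidalLinear k _ (ModuleCat.{u} R) _ _ _ mon preadd


/-! The endomorphisms of the unit `K` commute (Eckmann–Hilton) and `K ≠ 0`. Since `2` is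
invertible, `R` splits along the idempotents `(1 ± x)/2`, on whose images `R` acts through `k`; a
rank-one argument shows each image is at most one-dimensional, so `K` is cyclic, `K ≅ R ⧸ I`.
Finally the ideals of `R = k[X]/((X - 1)(X + 1))` are `0`, `(x - 1)`, `(x + 1)` and `R`. -/

open Limits Polynomial

namespace CategoryTheory.MonoidalCategory

variable {C : Type*} [Category C] [MonoidalCategory C]

theorem tensorUnit_endo_comm (f g : 𝟙_ C ⟶ 𝟙_ C) : f ≫ g = g ≫ f := by
  have h := whisker_exchange (f := f) (g := g)
  simp only [id_whiskerLeft, MonoidalCategory.whiskerRight_id, unitors_equal, unitors_inv_equal,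
    Category.assoc, Iso.inv_hom_id_assoc, cancel_epi] at h
  rw [← Category.assoc, ← Category.assoc, cancel_mono] at h
  exact h.symm

theorem isZero_of_isZero_tensorUnit [Preadditive C] [MonoidalPreadditive C]
    (h : IsZero (𝟙_ C)) (X : C) : IsZero X := by
  rw [IsZero.iff_id_eq_zero]
  calc 𝟙 X = (λ_ X).inv ≫ 𝟙 (𝟙_ C) ▷ X ≫ (λ_ X).hom := by simp
    _ = 0 := by rw [h.eq_zero_of_src (𝟙 _)]; simp

end CategoryTheory.MonoidalCategory

namespace AddClosedSymmMonStruct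

variable {R : Type u} [Ring R] (s : AddClosedSymmMonStruct R)

theorem unit_comp_comm (f g : s.unit →ₗ[R] s.unit) : f ∘ₗ g = g ∘ₗ f := by
  let := s.mon
  exact congrArg ModuleCat.Hom.hom (tensorUnit_endo_comm (ModuleCat.ofHom g) (ModuleCat.ofHom f))

theorem nontrivial_unit [Nontrivial R] : Nontrivial s.unit := by
  let := s.mon
  let := s.preadd
  rw [← not_subsingleton_iff_nontrivial, ← ModuleCat.isZero_iff_subsingleton]
  intro h
  exact not_subsingleton R
    (ModuleCat.isZero_iff_subsingleton.1 (isZero_of_isZero_tensorUnit h (ModuleCat.of R R)))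

end AddClosedSymmMonStruct

section EndCommutative

variable {k R M : Type*} [Field k] [CommRing R] [Algebra k R] [AddCommGroup M] [Module R M]
  [Module k M] [IsScalarTower k R M] {e : R}

theorem exists_linearMap_eq_dual_smul (he : ∀ r : R, ∃ c : k, r * e = algebraMap k R c * e)
    (φ : Module.Dual k M) {w : M} (hw : e • w = w) :
    ∃ F : M →ₗ[R] M, ∀ m, F m = φ (e • m) • w := by
  refine ⟨{ toFun m := φ (e • m) • w, map_add' m n := by simp [add_smul], map_smul' r m := ?_ },
    fun _ => rfl⟩
  obtain ⟨c, hc⟩ := he r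
  have hm : e • r • m = c • e • m := by rw [smul_smul, mul_comm, hc, mul_smul, algebraMap_smul]
  have hw' : r • w = c • w := by rw [← hw, smul_smul, hc, mul_smul, algebraMap_smul]
  simp only [hm, map_smul, smul_eq_mul, mul_smul, RingHom.id_apply, smul_comm r, hw']
  exact smul_comm _ _ _

/-- For `φ v = 1`, the two composites of the rank-one maps `φ (e • ·) • v` and `φ (e • ·) • u`
send `v` to `φ u • v` and to `u`. -/
theorem exists_eq_smul_of_smul_eq_self (hcomm : ∀ f g : M →ₗ[R] M, f ∘ₗ g = g ∘ₗ f)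
    (he : ∀ r : R, ∃ c : k, r * e = algebraMap k R c * e)
    {v u : M} (hv : e • v = v) (hv0 : v ≠ 0) (hu : e • u = u) : ∃ c : k, u = c • v := by
  obtain ⟨φ, hφ⟩ := Module.Projective.exists_dual_eq_one k hv0
  obtain ⟨F, hF⟩ := exists_linearMap_eq_dual_smul he φ hv
  obtain ⟨G, hG⟩ := exists_linearMap_eq_dual_smul he φ hu
  refine ⟨φ u, ?_⟩
  simpa [hF, hG, hu, hv, hφ] using (LinearMap.congr_fun (hcomm F G) v).symm

theorem exists_forall_eq_smul_of_smul_eq_self (hcomm : ∀ f g : M →ₗ[R] M, f ∘ₗ g = g ∘ₗ f)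
    (he : ∀ r : R, ∃ c : k, r * e = algebraMap k R c * e) :
    ∃ v : M, e • v = v ∧ ∀ u : M, e • u = u → ∃ c : k, u = c • v := by
  by_cases h : ∃ v : M, e • v = v ∧ v ≠ 0
  · obtain ⟨v, hv, hv0⟩ := h
    exact ⟨v, hv, fun u hu => exists_eq_smul_of_smul_eq_self hcomm he hv hv0 hu⟩
  · push Not at h
    exact ⟨0, smul_zero e, fun u hu => ⟨0, by rw [h u hu, zero_smul]⟩⟩

theorem Module.isPrincipal_of_forall_comp_comm (hcomm : ∀ f g : M →ₗ[R] M, f ∘ₗ g = g ∘ₗ f)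
    (hidem : IsIdempotentElem e) (he : ∀ r : R, ∃ c : k, r * e = algebraMap k R c * e)
    (he' : ∀ r : R, ∃ c : k, r * (1 - e) = algebraMap k R c * (1 - e)) :
    Module.IsPrincipal R M := by
  obtain ⟨v, hv, hvgen⟩ := exists_forall_eq_smul_of_smul_eq_self (k := k) hcomm he
  obtain ⟨w, hw, hwgen⟩ := exists_forall_eq_smul_of_smul_eq_self (k := k) hcomm he'
  refine ⟨v + w, Eq.symm (Submodule.eq_top_iff'.2 fun u => ?_)⟩
  obtain ⟨a, ha⟩ := hvgen (e • u) (by rw [smul_smul, hidem.eq])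
  obtain ⟨b, hb⟩ := hwgen ((1 - e) • u) (by rw [smul_smul, hidem.one_sub.eq])
  have hev : (1 - e) • v = 0 := by
    rw [← hv, smul_smul, sub_mul, one_mul, hidem.eq, sub_self, zero_smul]
  have hew : e • w = 0 := by rw [← hw, smul_smul, mul_sub, mul_one, hidem.eq, sub_self, zero_smul]
  have hu : u = e • u + (1 - e) • u := by rw [← add_smul, add_sub_cancel, one_smul]
  rw [Submodule.mem_span_singleton]
  refine ⟨algebraMap k R a * e + algebraMap k R b * (1 - e), ?_⟩
  simp only [add_smul, mul_smul, smul_add, hv, hew, hev, hw, smul_zero, add_zero, zero_add,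
    algebraMap_smul, ← ha, ← hb, ← hu]

end EndCommutative

theorem Module.IsPrincipal.exists_linearEquiv_quotient {R M : Type*} [CommRing R]
    [AddCommGroup M] [Module R M] [Module.IsPrincipal R M] :
    ∃ I : Ideal R, Nonempty (M ≃ₗ[R] R ⧸ I) := by
  obtain ⟨m, hm⟩ := Submodule.IsPrincipal.principal (⊤ : Submodule R M)
  exact ⟨_, ⟨((Ideal.quotTorsionOfEquivSpanSingleton R M m).trans
    ((LinearEquiv.ofEq _ _ hm.symm).trans (LinearEquiv.ofTop ⊤ rfl))).symm⟩⟩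

theorem Polynomial.aeval_mul_eq_of_sub_mul_eq_zero {k A : Type*} [CommRing k] [CommRing A]
    [Algebra k A] {x e : A} {σ : k} (h : (x - algebraMap k A σ) * e = 0) (p : k[X]) :
    aeval x p * e = algebraMap k A (p.eval σ) * e := by
  obtain ⟨q, hq⟩ := X_sub_C_dvd_sub_C_eval (a := σ) (p := p)
  have hq' := congrArg (aeval x) hq
  simp only [map_sub, map_mul, aeval_X, aeval_C] at hq'
  linear_combination e * hq' + aeval x q * h

theorem Polynomial.exists_mul_eq_algebraMap_mul {k : Type*} [CommRing k] {I : Ideal k[X]}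
    {e : k[X] ⧸ I} {σ : k} (h : (Ideal.Quotient.mk I X - algebraMap k _ σ) * e = 0)
    (r : k[X] ⧸ I) : ∃ c : k, r * e = algebraMap k _ c * e := by
  obtain ⟨p, rfl⟩ := Ideal.Quotient.mk_surjective r
  refine ⟨p.eval σ, ?_⟩
  have := aeval_mul_eq_of_sub_mul_eq_zero h p
  rwa [← Ideal.Quotient.mkₐ_eq_mk k, aeval_algHom_apply, aeval_X_left_apply] at this

theorem exists_isIdempotentElem_quotient_X_sq_sub_one {k : Type*} [Field k] (h2 : (2 : k) ≠ 0) :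
    ∃ e : k[X] ⧸ Ideal.span {(X : k[X]) ^ 2 - 1}, IsIdempotentElem e ∧
      (∀ r, ∃ c : k, r * e = algebraMap k _ c * e) ∧
      ∀ r, ∃ c : k, r * (1 - e) = algebraMap k _ c * (1 - e) := by
  set x := Ideal.Quotient.mk (Ideal.span {(X : k[X]) ^ 2 - 1}) X
  have hx : x ^ 2 - 1 = 0 := by
    have := Ideal.Quotient.mk_singleton_self ((X : k[X]) ^ 2 - 1)
    rwa [map_sub, map_pow, map_one] at this
  set t := algebraMap k (k[X] ⧸ Ideal.span {(X : k[X]) ^ 2 - 1}) 2⁻¹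
  have ht : t * 2 - 1 = 0 := by
    simp [t, ← map_ofNat (algebraMap k (k[X] ⧸ Ideal.span {(X : k[X]) ^ 2 - 1})) 2, ← map_mul, h2]
  refine ⟨t * (1 + x), ?_, exists_mul_eq_algebraMap_mul (σ := 1) ?_,
    exists_mul_eq_algebraMap_mul (σ := -1) ?_⟩
  · unfold IsIdempotentElem
    linear_combination t ^ 2 * hx + t * (1 + x) * ht
  · rw [map_one]
    linear_combination t * hx
  · rw [map_neg, map_one]
    linear_combination (-t) * hx - (x + 1) * ht

namespace Ideal

variable {A : Type*} [CommRing A] [IsDomain A] [IsPrincipalIdealRing A] [DecompositionMonoid A]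
  {p q : A}

theorem eq_span_or_eq_top_of_mul_mem (hp : Irreducible p) (hq : Irreducible q) {J : Ideal A}
    (h : p * q ∈ J) : J = span {p * q} ∨ J = span {p} ∨ J = span {q} ∨ J = ⊤ := by
  obtain ⟨g, hg⟩ := (IsPrincipalIdealRing.principal J).principal
  obtain ⟨g₁, g₂, h₁, h₂, rfl⟩ := exists_dvd_and_dvd_of_dvd_mul (mem_span_singleton.1 (hg ▸ h))
  have key {a b : A} (ha : Associated a g₁) (hb : Associated b g₂) : J = span {a * b} :=
    hg.trans (span_singleton_eq_span_singleton.2 (ha.mul_mul hb).symm)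
  rcases hp.dvd_iff.1 h₁ with hu₁ | hu₁ <;> rcases hq.dvd_iff.1 h₂ with hu₂ | hu₂
  · refine .inr (.inr (.inr ?_))
    simpa using key (associated_one_iff_isUnit.2 hu₁).symm (associated_one_iff_isUnit.2 hu₂).symm
  · exact .inr (.inr (.inl (by simpa using key (associated_one_iff_isUnit.2 hu₁).symm hu₂)))
  · exact .inr (.inl (by simpa using key hu₁ (associated_one_iff_isUnit.2 hu₂).symm))
  · exact .inl (key hu₁ hu₂)

theorem eq_bot_or_span_or_top_of_quotient_span_mul {f : A} (hp : Irreducible p)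
    (hq : Irreducible q) (hf : f = p * q) (I : Ideal (A ⧸ span {f})) :
    I = ⊥ ∨ I = span {Quotient.mk _ p} ∨ I = span {Quotient.mk _ q} ∨ I = ⊤ := by
  have hI := map_comap_of_surjective _ Quotient.mk_surjective I
  have hpq : p * q ∈ I.comap (Quotient.mk _) := by
    simp [← hf, Quotient.eq_zero_iff_mem.2 (mem_span_singleton_self f)]
  rcases eq_span_or_eq_top_of_mul_mem hp hq hpq with h | h | h | h <;> rw [h] at hI
  · rw [← hf, map_quotient_self] at hI
    exact .inl hI.symm
  all_goals simp_all [map_span]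

end Ideal

/-- Let `k` be a field of characteristic different from `2`, and `R = k[X]/(X² - 1) ≅ k[ℤ/2]`.
The unit `K` of any `k`-linear additive closed symmetric monoidal structure on `R`-modules is
isomorphic to `R`, to `k₊ = R/(x - 1)` or to `k₋ = R/(x + 1)`. -/
theorem unit_of_groupRing (k : Type) [Field k] (h2 : (2 : k) ≠ 0)
    (s : KLinAddClosedSymmMonStruct k
      (Polynomial k ⧸ Ideal.span {(Polynomial.X : Polynomial k) ^ 2 - 1})) :
    Nonempty (↥(s.unit) ≃ₗ[Polynomial k ⧸ Ideal.span {(Polynomial.X : Polynomial k) ^ 2 - 1}]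
        (Polynomial k ⧸ Ideal.span {(Polynomial.X : Polynomial k) ^ 2 - 1})) ∨
      Nonempty (↥(s.unit) ≃ₗ[Polynomial k ⧸ Ideal.span {(Polynomial.X : Polynomial k) ^ 2 - 1}]
        ((Polynomial k ⧸ Ideal.span {(Polynomial.X : Polynomial k) ^ 2 - 1}) ⧸
          Ideal.span {Ideal.Quotient.mk (Ideal.span {(Polynomial.X : Polynomial k) ^ 2 - 1})
            (Polynomial.X - 1)})) ∨
      Nonempty (↥(s.unit) ≃ₗ[Polynomial k ⧸ Ideal.span {(Polynomial.X : Polynomial k) ^ 2 - 1}]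
        ((Polynomial k ⧸ Ideal.span {(Polynomial.X : Polynomial k) ^ 2 - 1}) ⧸
          Ideal.span {Ideal.Quotient.mk (Ideal.span {(Polynomial.X : Polynomial k) ^ 2 - 1})
            (Polynomial.X + 1)})) := by
  have hp : Irreducible (X - 1 : k[X]) := by simpa using irreducible_X_sub_C (1 : k)
  have hq : Irreducible (X + 1 : k[X]) := by simpa using irreducible_X_sub_C (-1 : k)
  have hf : (X : k[X]) ^ 2 - 1 = (X - 1) * (X + 1) := by ring
  have : Nontrivial (k[X] ⧸ Ideal.span {(X : k[X]) ^ 2 - 1}) := Ideal.Quotient.nontrivial_iff.2 <|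
    by simpa [Ideal.span_singleton_eq_top, hf] using hp.not_isUnit ∘ isUnit_of_mul_isUnit_left
  let : Module k s.unit := Module.compHom _ (algebraMap k (k[X] ⧸ Ideal.span {(X : k[X]) ^ 2 - 1}))
  have : IsScalarTower k (k[X] ⧸ Ideal.span {(X : k[X]) ^ 2 - 1}) s.unit :=
    ⟨fun a r m => (congrArg (· • m) (Algebra.smul_def a r)).trans (mul_smul _ _ _)⟩
  obtain ⟨e, hidem, he, he'⟩ := exists_isIdempotentElem_quotient_X_sq_sub_one h2
  have := Module.isPrincipal_of_forall_comp_comm s.unit_comp_comm hidem he he'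
  obtain ⟨I, ⟨φ⟩⟩ := Module.IsPrincipal.exists_linearEquiv_quotient
    (R := k[X] ⧸ Ideal.span {(X : k[X]) ^ 2 - 1}) (M := s.unit)
  rcases Ideal.eq_bot_or_span_or_top_of_quotient_span_mul hp hq hf I with rfl | rfl | rfl | rfl
  · exact .inl ⟨φ.trans (Submodule.quotEquivOfEqBot ⊥ rfl)⟩
  · exact .inr (.inl ⟨φ⟩)
  · exact .inr (.inr ⟨φ⟩)
  · have := s.nontrivial_unit
    exact absurd (φ.toEquiv.subsingleton_congr.2 (Ideal.Quotient.subsingleton_iff.2 rfl))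
      (not_subsingleton _)
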